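/- Let m be a positive integer. For every positive integer n with n > (L_{2m} + L_{2m}² − 3)³, if σ₂(n) − n² = L_{2m}·n + L_{2m}² − 3 (as integers), then either there exists an integer k ≥ 0 such that n = L_{2k+1} · L_{2k+2m+1} with both L_{2k+1} and L_{2k+2m+1} prime, or there exists an integer k with 0 ≤ k < m and m ≠ 2k+1 such that n = L_{2k+1} · L_{2m−2k−1} with both L_{2k+1} and L_{2m−2k−1} prime. -/

import Mathlib

/-!
Write `L = L_{2m}`. Since `n` is large, the shape of `σ₂(n) - n² = L n + L² - 3` forces
`n = p q` with primes `p < q`, and then `σ₂(n) = (1 + p²)(1 + q²)` turns it into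
`p² + q² + 4 = L p q + L²`. As `L² - 4 = 5 F_{2m}²`, the discriminant of this quadratic in `q`
shows that `p² + 4 = 5 w²`, whose solutions are exactly `(p, w) = (L_{2k+1}, F_{2k+1})`.
Binet's formula shows that `L_{2k+2m+1}` is also a root of that quadratic; the other root is
smaller than `p`, so `q = L_{2k+2m+1}`.
-/

/-- The Lucas numbers: `L 0 = 2`, `L 1 = 1`, `L (n+2) = L (n+1) + L n`. -/
def lucasNum : ℕ → ℕ
  | 0 => 2
  | 1 => 1
  | n + 2 => lucasNum (n + 1) + lucasNum n

open Real goldenRatio ArithmeticFunction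
open Nat (fib)
open scoped ArithmeticFunction.sigma

theorem lucasNum_add_two (n : ℕ) : lucasNum (n + 2) = lucasNum (n + 1) + lucasNum n := rfl

theorem lucasNum_pos : ∀ n, 0 < lucasNum n
  | 0 | 1 => by decide
  | n + 2 => Nat.add_pos_right _ (lucasNum_pos n)

theorem lucasNum_lt_lucasNum {a b : ℕ} (ha : 1 ≤ a) (hab : a < b) : lucasNum a < lucasNum b := by
  obtain ⟨a, rfl⟩ := Nat.exists_eq_add_of_le' ha
  obtain ⟨b, rfl⟩ := Nat.exists_eq_add_of_le' (ha.trans hab.le)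
  have : StrictMono fun n ↦ lucasNum (n + 1) :=
    strictMono_nat_of_lt_succ fun n ↦ Nat.lt_add_of_pos_right (lucasNum_pos n)
  exact this (by omega)

theorem coe_lucasNum : ∀ n, (lucasNum n : ℝ) = φ ^ n + ψ ^ n
  | 0 => by norm_num [lucasNum]
  | 1 => by simp [lucasNum, goldenRatio_add_goldenConj]
  | n + 2 => by
    rw [lucasNum_add_two, Nat.cast_add, coe_lucasNum (n + 1), coe_lucasNum n]
    linear_combination (-φ ^ n) * goldenRatio_sq - ψ ^ n * goldenConj_sq

theorem sqrt_five_mul_fib (n : ℕ) : √5 * fib n = φ ^ n - ψ ^ n := by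
  rw [coe_fib_eq]; field_simp

theorem two_mul_lucasNum_add (a b : ℕ) :
    2 * lucasNum (a + b) = lucasNum a * lucasNum b + 5 * (fib a * fib b) := by
  have h5 : √5 * √5 = 5 := Real.mul_self_sqrt (by norm_num)
  have : (2 * lucasNum (a + b) : ℝ) = lucasNum a * lucasNum b + 5 * (fib a * fib b) := by
    rw [coe_lucasNum, coe_lucasNum, coe_lucasNum, pow_add, pow_add]
    linear_combination (fib a * fib b : ℝ) * h5 - (φ ^ b - ψ ^ b) * sqrt_five_mul_fib a -
      √5 * fib a * sqrt_five_mul_fib b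
  exact_mod_cast this

theorem two_mul_fib_add (a b : ℕ) :
    2 * fib (a + b) = fib a * lucasNum b + lucasNum a * fib b := by
  have : (√5 * (2 * fib (a + b)) : ℝ) = √5 * (fib a * lucasNum b + lucasNum a * fib b) := by
    have hab := sqrt_five_mul_fib (a + b)
    rw [pow_add, pow_add] at hab
    rw [coe_lucasNum, coe_lucasNum]
    linear_combination 2 * hab - (φ ^ b + ψ ^ b) * sqrt_five_mul_fib a -
      (φ ^ a + ψ ^ a) * sqrt_five_mul_fib b
  exact_mod_cast mul_left_cancel₀ (by positivity) this

theorem lucasNum_sq (n : ℕ) : (lucasNum n : ℤ) ^ 2 = 5 * fib n ^ 2 + 4 * (-1) ^ n := by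
  have h5 : √5 * √5 = 5 := Real.mul_self_sqrt (by norm_num)
  have : (lucasNum n : ℝ) ^ 2 = 5 * fib n ^ 2 + 4 * (-1) ^ n := by
    rw [coe_lucasNum, ← goldenRatio_mul_goldenConj, mul_pow]
    linear_combination (fib n : ℝ) ^ 2 * h5 - (√5 * fib n + φ ^ n - ψ ^ n) * sqrt_five_mul_fib n
  exact_mod_cast this

theorem lucasNum_sq_add_lucasNum_add_sq {a b : ℕ} (ha : Odd a) (hb : Even b) :
    lucasNum a ^ 2 + lucasNum (a + b) ^ 2 + 4 =
      lucasNum b * lucasNum a * lucasNum (a + b) + lucasNum b ^ 2 := by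
  have hφψ (n : ℕ) : φ ^ n * ψ ^ n = (-1) ^ n := by rw [← mul_pow, goldenRatio_mul_goldenConj]
  have ea := hφψ a
  have eb := hφψ b
  rw [ha.neg_one_pow] at ea
  rw [hb.neg_one_pow] at eb
  have : (lucasNum a ^ 2 + lucasNum (a + b) ^ 2 + 4 : ℝ) =
      lucasNum b * lucasNum a * lucasNum (a + b) + lucasNum b ^ 2 := by
    rw [coe_lucasNum, coe_lucasNum, coe_lucasNum, pow_add, pow_add]
    linear_combination (2 - φ ^ (2 * b) - ψ ^ (2 * b)) * ea - (φ ^ (2 * a) + ψ ^ (2 * a) + 2) * eb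
  exact_mod_cast this

theorem exists_lucasNum_fib_of_sq_add_four {x w : ℕ} (h : x ^ 2 + 4 = 5 * w ^ 2) :
    ∃ k, x = lucasNum (2 * k + 1) ∧ w = fib (2 * k + 1) := by
  induction w using Nat.strong_induction_on generalizing x with
  | _ w ih =>
    obtain hw | hw : w ≤ 1 ∨ 2 ≤ w := by omega
    · have hw1 : w = 1 := by interval_cases w <;> omega
      have hx1 : x = 1 := by subst hw1; nlinarith
      exact ⟨0, by simp [hx1, lucasNum], by simp [hw1]⟩
    have hpar : x % 2 = w % 2 := by
      have : Even x ↔ Even w := by simpa [parity_simps] using congrArg Even h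
      simp only [Nat.even_iff] at this
      omega
    have h5w : 5 * w < 3 * x := by nlinarith
    have hx3 : x < 3 * w := by nlinarith
    have hwx : w < x := by nlinarith
    -- `(x, w) ↦ ((3x - 5w) / 2, (3w - x) / 2)` inverts `(L_n, F_n) ↦ (L_{n+2}, F_{n+2})`
    obtain ⟨x', hx'⟩ : ∃ x', 2 * x' + 5 * w = 3 * x := ⟨(3 * x - 5 * w) / 2, by omega⟩
    obtain ⟨w', hw'⟩ : ∃ w', 2 * w' + x = 3 * w := ⟨(3 * w - x) / 2, by omega⟩
    have h' : x' ^ 2 + 4 = 5 * w' ^ 2 := by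
      have hx'q : (2 * x' + 5 * w : ℚ) = 3 * x := by exact_mod_cast hx'
      have hw'q : (2 * w' + x : ℚ) = 3 * w := by exact_mod_cast hw'
      have hq : (x : ℚ) ^ 2 + 4 = 5 * w ^ 2 := by exact_mod_cast h
      have : (x' : ℚ) ^ 2 + 4 = 5 * w' ^ 2 := by
        linear_combination (x' + (3 * x - 5 * w) / 2) / 2 * hx'q -
          5 * (w' + (3 * w - x) / 2) / 2 * hw'q + hq
      exact_mod_cast this
    obtain ⟨k, rfl, rfl⟩ := ih w' (by omega) h'
    have hL := two_mul_lucasNum_add (2 * k + 1) 2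
    have hF := two_mul_fib_add (2 * k + 1) 2
    simp only [show lucasNum 2 = 3 from rfl, Nat.fib_two] at hL hF
    refine ⟨k + 1, ?_, ?_⟩ <;> rw [show 2 * (k + 1) + 1 = 2 * k + 1 + 2 by ring] <;> omega

theorem three_le_lucasNum_two_mul {m : ℕ} (hm : 1 ≤ m) : 3 ≤ lucasNum (2 * m) := by
  obtain rfl | hm := hm.eq_or_lt
  · rfl
  · exact (lucasNum_lt_lucasNum (a := 2) (b := 2 * m) (by norm_num) (by omega)).le

theorem exists_sq_add_four_eq_five_mul_sq {p q L F : ℤ} (hF : F ≠ 0)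
    (hL : L ^ 2 = 5 * F ^ 2 + 4) (h : p ^ 2 + q ^ 2 + 4 = L * p * q + L ^ 2) :
    ∃ v, p ^ 2 + 4 = 5 * v ^ 2 := by
  have hdisc : (2 * q - L * p) ^ 2 = F ^ 2 * (5 * (p ^ 2 + 4)) := by
    linear_combination 4 * h + (p ^ 2 + 4) * hL
  obtain ⟨u, hu⟩ : F ∣ 2 * q - L * p :=
    (Int.pow_dvd_pow_iff two_ne_zero).mp (Dvd.intro _ hdisc.symm)
  have hu2 : u ^ 2 = 5 * (p ^ 2 + 4) := by
    apply mul_left_cancel₀ (pow_ne_zero 2 hF)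
    rw [← hdisc, hu]
    ring
  obtain ⟨v, rfl⟩ : (5 : ℤ) ∣ u :=
    (by norm_num : Prime (5 : ℤ)).dvd_of_dvd_pow (Dvd.intro _ hu2.symm)
  exact ⟨v, by linarith⟩

theorem exists_lucasNum_of_sq_add_sq_add_four {m p q : ℕ} (hm : 1 ≤ m) (hpq : p < q)
    (h : p ^ 2 + q ^ 2 + 4 = lucasNum (2 * m) * p * q + lucasNum (2 * m) ^ 2) :
    ∃ k, p = lucasNum (2 * k + 1) ∧ q = lucasNum (2 * k + 2 * m + 1) := by
  set L := lucasNum (2 * m)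
  have hL : 3 ≤ L := three_le_lucasNum_two_mul hm
  have hF : (fib (2 * m) : ℤ) ≠ 0 := by exact_mod_cast (Nat.fib_pos.mpr (by omega)).ne'
  have hLF : (L : ℤ) ^ 2 = 5 * fib (2 * m) ^ 2 + 4 := by
    rw [lucasNum_sq, (even_two_mul m).neg_one_pow, mul_one]
  obtain ⟨v, hv⟩ :=
    exists_sq_add_four_eq_five_mul_sq (p := p) (q := q) hF hLF (by exact_mod_cast h)
  obtain ⟨k, rfl, -⟩ := exists_lucasNum_fib_of_sq_add_four (x := p) (w := v.natAbs)
    (by zify; rwa [sq_abs])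
  refine ⟨k, rfl, ?_⟩
  set p := lucasNum (2 * k + 1)
  set y := lucasNum (2 * k + 2 * m + 1)
  have hpy : p < y := lucasNum_lt_lucasNum (by omega) (by omega)
  have hy : p ^ 2 + y ^ 2 + 4 = L * p * y + L ^ 2 := by
    have := lucasNum_sq_add_lucasNum_add_sq (odd_two_mul_add_one k) (even_two_mul m)
    rw [show 2 * k + 1 + 2 * m = 2 * k + 2 * m + 1 by ring] at this
    linear_combination this
  zify at h hy hpq hpy hL ⊢
  -- `q` and `y` are both roots of `t ^ 2 - L p t + (p ^ 2 + 4 - L ^ 2)`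
  have hroots : ((q : ℤ) - y) * (q + y - L * p) = 0 := by linear_combination h - hy
  rcases mul_eq_zero.mp hroots with hqy | hqy
  · linear_combination hqy
  · have hprod : (q : ℤ) * y = p ^ 2 + 4 - L ^ 2 := by linear_combination y * hqy - hy
    nlinarith

theorem sigma_apply_prime {k p : ℕ} (hp : p.Prime) : σ k p = 1 + p ^ k := by
  simpa [Finset.sum_range_succ] using sigma_apply_prime_pow (k := k) (i := 1) hp

theorem sigma_apply_prime_sq {k p : ℕ} (hp : p.Prime) :
    σ k (p ^ 2) = 1 + p ^ k + (p ^ 2) ^ k := by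
  simp [sigma_apply_prime_pow hp, Finset.sum_range_succ, ← pow_mul, mul_comm]

theorem one_add_pow_add_pow_le_sigma {k d n : ℕ} (hd : d ∣ n) (h1 : 1 < d) (hdn : d < n) :
    1 + d ^ k + n ^ k ≤ σ k n := by
  have hsub : ({1, d, n} : Finset ℕ) ⊆ n.divisors := by
    have hn : n ≠ 0 := by omega
    simp [Finset.insert_subset_iff, hd, hn]
  calc 1 + d ^ k + n ^ k = ∑ x ∈ {1, d, n}, x ^ k := by
        rw [Finset.sum_insert (by simp; omega), Finset.sum_pair hdn.ne, one_pow, add_assoc]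
    _ ≤ σ k n := by rw [sigma_apply]; exact Finset.sum_le_sum_of_subset hsub

theorem exists_primes_eq_mul_of_sigma_two_eq {a b n : ℕ} (ha : 1 ≤ a) (hb : 2 ≤ b)
    (hn : (a + b) ^ 3 < n) (h : σ 2 n = n ^ 2 + a * n + b) :
    ∃ p q, p.Prime ∧ q.Prime ∧ p < q ∧ n = p * q := by
  have hbn : a + b < n := (Nat.le_self_pow three_ne_zero _).trans_lt hn
  have hp : n.minFac.Prime := Nat.minFac_prime (by omega)
  set p := n.minFac
  obtain ⟨q, hnpq⟩ : p ∣ n := n.minFac_dvd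
  have hp2 := hp.two_le
  have hq1 : 1 < q := by
    by_contra! hq
    interval_cases q
    · omega
    · rw [mul_one] at hnpq
      rw [hnpq, sigma_apply_prime hp] at h
      nlinarith
  have hqn : q < n := by nlinarith
  have hq_lt : q < (a + 1) * p := by
    have := one_add_pow_add_pow_le_sigma (k := 2) (Dvd.intro_left p hnpq.symm) hq1 hqn
    nlinarith
  have hq : q.Prime := by
    by_contra hq
    have hpq : p ^ 2 ≤ q :=
      (Nat.pow_le_pow_left (Nat.minFac_le_of_dvd (Nat.minFac_prime (by omega)).two_le
        ((q.minFac_dvd).trans (Dvd.intro_left p hnpq.symm))) 2).trans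
        (Nat.minFac_sq_le_self (by omega) hq)
    have hpa : p ≤ a := by nlinarith
    have : n < a * ((a + 1) * a) := calc
      n = p * q := hnpq
      _ ≤ a * q := Nat.mul_le_mul_right q hpa
      _ < a * ((a + 1) * a) := Nat.mul_lt_mul_of_pos_left
          (hq_lt.trans_le (Nat.mul_le_mul_left _ hpa)) (by omega)
    nlinarith [Nat.pow_le_pow_left (show a + 1 ≤ a + b by omega) 3]
  have hpq : p ≠ q := by
    rintro rfl
    rw [hnpq, ← sq, sigma_apply_prime_sq hp] at h
    nlinarith
  exact ⟨p, q, hp, hq, lt_of_le_of_ne (Nat.minFac_le_of_dvd hq.two_le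
    (Dvd.intro_left p hnpq.symm)) hpq, hnpq⟩

theorem stmt_15_general (m : ℕ) (hm : 1 ≤ m) (n : ℕ)
    (hbig : (n : ℤ) > ((lucasNum (2 * m) : ℤ) + (lucasNum (2 * m) : ℤ) ^ 2 - 3) ^ 3)
    (heq : ((ArithmeticFunction.sigma 2) n : ℤ) - (n : ℤ) ^ 2 =
      (lucasNum (2 * m) : ℤ) * n + (lucasNum (2 * m) : ℤ) ^ 2 - 3) :
    (∃ k : ℕ, n = lucasNum (2 * k + 1) * lucasNum (2 * k + 2 * m + 1) ∧
      (lucasNum (2 * k + 1)).Prime ∧ (lucasNum (2 * k + 2 * m + 1)).Prime) ∨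
    (∃ k : ℕ, k < m ∧ m ≠ 2 * k + 1 ∧
      n = lucasNum (2 * k + 1) * lucasNum (2 * m - (2 * k + 1)) ∧
      (lucasNum (2 * k + 1)).Prime ∧ (lucasNum (2 * m - (2 * k + 1))).Prime) := by
  set L := lucasNum (2 * m)
  have hL : 3 ≤ L := three_le_lucasNum_two_mul hm
  have hL9 : 9 ≤ L ^ 2 := by nlinarith
  have hL3 : 3 ≤ L ^ 2 := by omega
  have hσ : σ 2 n = n ^ 2 + L * n + (L ^ 2 - 3) := by
    zify [hL3]
    linarith
  obtain ⟨p, q, hp, hq, hpq, rfl⟩ := exists_primes_eq_mul_of_sigma_two_eq (by omega) (by omega)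
    (by zify [hL3]; linarith) hσ
  rw [isMultiplicative_sigma.map_mul_of_coprime ((Nat.coprime_primes hp hq).mpr hpq.ne),
    sigma_apply_prime hp, sigma_apply_prime hq] at hσ
  have hpq_eq : p ^ 2 + q ^ 2 + 4 = L * p * q + L ^ 2 := by
    zify [hL3] at hσ ⊢
    linear_combination hσ
  obtain ⟨k, rfl, rfl⟩ := exists_lucasNum_of_sq_add_sq_add_four hm hpq hpq_eq
  exact Or.inl ⟨k, rfl, hp, hq⟩

theorem stmt_15 (m : ℕ) (hm : 1 ≤ m) (n : ℕ) (hn : 0 < n)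
    (hbig : (n : ℤ) > ((lucasNum (2 * m) : ℤ) + (lucasNum (2 * m) : ℤ) ^ 2 - 3) ^ 3)
    (heq : ((ArithmeticFunction.sigma 2) n : ℤ) - (n : ℤ) ^ 2 =
      (lucasNum (2 * m) : ℤ) * n + (lucasNum (2 * m) : ℤ) ^ 2 - 3) :
    (∃ k : ℕ, n = lucasNum (2 * k + 1) * lucasNum (2 * k + 2 * m + 1) ∧
      (lucasNum (2 * k + 1)).Prime ∧ (lucasNum (2 * k + 2 * m + 1)).Prime) ∨
    (∃ k : ℕ, k < m ∧ m ≠ 2 * k + 1 ∧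
      n = lucasNum (2 * k + 1) * lucasNum (2 * m - (2 * k + 1)) ∧
      (lucasNum (2 * k + 1)).Prime ∧ (lucasNum (2 * m - (2 * k + 1))).Prime) :=
  stmt_15_general m hm n hbig heq
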